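/- Fix u ∈ (0,1) and points p₀, p₁, p₂, p₃ ∈ ℝ² with p₁ ≠ p₂. Then the two-variable function f(ω₁, ω₂) = (B₀(u)·p₀ + ω₁·B₁(u)·p₁ + ω₂·B₂(u)·p₂ + B₃(u)·p₃) / (B₀(u) + ω₁·B₁(u) + ω₂·B₂(u) + B₃(u)) has no limit as (ω₁, ω₂) → (+∞, +∞): there is no point L ∈ ℝ² such that f tends to L along the product filter atTop ×ˢ atTop on ℝ × ℝ. -/

import Mathlib

open Filter Topology

/-- The cubic Bernstein polynomials `B j u = (3 choose j) u^j (1-u)^(3-j)`. -/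
noncomputable def cubicBernstein (j : ℕ) (u : ℝ) : ℝ :=
  (Nat.choose 3 j : ℝ) * u ^ j * (1 - u) ^ (3 - j)

/-!
Along the ray `ω₂ = β ω₁` the constant terms become negligible, so the curve point tends to
`(B₁ + β B₂)⁻¹ (B₁ p₁ + β B₂ p₂)`, the point of the segment `[p₁, p₂]` with parameter
`β B₂ / (B₁ + β B₂)`. Since `B₁, B₂ > 0` this parameter depends on `β`, and since `p₁ ≠ p₂` the
segment is not a point, so the rays `β = 1` and `β = 2` lead to different limits.
-/

lemma cubicBernstein_pos {j : ℕ} (hj : j ≤ 3) {u : ℝ} (hu : u ∈ Set.Ioo (0 : ℝ) 1) :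
    0 < cubicBernstein j u := by
  obtain ⟨hu₀, hu₁⟩ := hu
  have hchoose : (0 : ℝ) < Nat.choose 3 j := by exact_mod_cast Nat.choose_pos hj
  have h1u : 0 < 1 - u := sub_pos.2 hu₁
  unfold cubicBernstein
  positivity

section

variable {E : Type*} [AddCommGroup E] [Module ℝ E]

theorem inv_add_smul_add_smul_eq_lineMap {a b : ℝ} (hab : a + b ≠ 0) (p q : E) :
    (a + b)⁻¹ • (a • p + b • q) = AffineMap.lineMap p q (b / (a + b)) := by
  rw [AffineMap.lineMap_apply_module]
  match_scalars
  · field_simp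
    ring
  · field_simp

variable [TopologicalSpace E] [IsTopologicalAddGroup E] [ContinuousSMul ℝ E]

theorem tendsto_inv_add_mul_smul_add_smul_atTop (c : ℝ) {a : ℝ} (ha : a ≠ 0) (v w : E) :
    Tendsto (fun t : ℝ => (c + t * a)⁻¹ • (v + t • w)) atTop (𝓝 (a⁻¹ • w)) := by
  have hinv : Tendsto (fun t : ℝ => t⁻¹) atTop (𝓝 0) := tendsto_inv_atTop_zero
  have hden : Tendsto (fun t : ℝ => (c * t⁻¹ + a)⁻¹) atTop (𝓝 a⁻¹) := by
    simpa using ((hinv.const_mul c).add_const a).inv₀ (by simpa using ha)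
  have hnum : Tendsto (fun t : ℝ => t⁻¹ • v + w) atTop (𝓝 w) := by
    simpa using (hinv.smul_const v).add_const w
  refine (hden.smul hnum).congr' ?_
  filter_upwards [eventually_ne_atTop 0] with t ht
  rw [show c + t * a = t * (c * t⁻¹ + a) by field_simp, mul_inv_rev, mul_smul]
  congr 1
  rw [smul_add, inv_smul_smul₀ ht]

noncomputable def twoWeightBlend (c₀ b₁ b₂ c₃ : ℝ) (p₀ p₁ p₂ p₃ : E) (w : ℝ × ℝ) : E :=
  (c₀ + w.1 * b₁ + w.2 * b₂ + c₃)⁻¹ •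
    (c₀ • p₀ + (w.1 * b₁) • p₁ + (w.2 * b₂) • p₂ + c₃ • p₃)

theorem tendsto_twoWeightBlend_ray (c₀ b₁ b₂ c₃ : ℝ) (p₀ p₁ p₂ p₃ : E) {α β : ℝ}
    (h : α * b₁ + β * b₂ ≠ 0) :
    Tendsto (fun t : ℝ => twoWeightBlend c₀ b₁ b₂ c₃ p₀ p₁ p₂ p₃ (α * t, β * t)) atTop
      (𝓝 ((α * b₁ + β * b₂)⁻¹ • ((α * b₁) • p₁ + (β * b₂) • p₂))) := by
  refine (tendsto_inv_add_mul_smul_add_smul_atTop (c₀ + c₃) h (c₀ • p₀ + c₃ • p₃)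
    ((α * b₁) • p₁ + (β * b₂) • p₂)).congr fun t => ?_
  unfold twoWeightBlend
  congr 1
  · ring
  · module

theorem not_tendsto_twoWeightBlend [T2Space E] (c₀ c₃ : ℝ) {b₁ b₂ : ℝ} (hb₁ : 0 < b₁)
    (hb₂ : 0 < b₂) (p₀ p₃ : E) {p₁ p₂ : E} (hp : p₁ ≠ p₂) (L : E) :
    ¬ Tendsto (twoWeightBlend c₀ b₁ b₂ c₃ p₀ p₁ p₂ p₃) (atTop ×ˢ atTop) (𝓝 L) := by
  intro hL
  have ray_limit (β : ℝ) (hβ : 0 < β) :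
      L = AffineMap.lineMap p₁ p₂ (β * b₂ / (b₁ + β * b₂)) := by
    have hray : Tendsto (fun t : ℝ => (1 * t, β * t)) atTop (atTop ×ˢ atTop) :=
      (tendsto_id.const_mul_atTop one_pos).prodMk (tendsto_id.const_mul_atTop hβ)
    have hpos : 0 < 1 * b₁ + β * b₂ := by positivity
    have hlim := tendsto_nhds_unique (hL.comp hray)
      (tendsto_twoWeightBlend_ray c₀ b₁ b₂ c₃ p₀ p₁ p₂ p₃ hpos.ne')
    rwa [inv_add_smul_add_smul_eq_lineMap hpos.ne', one_mul] at hlim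
  have hparam := AffineMap.lineMap_injective ℝ hp
    ((ray_limit 1 one_pos).symm.trans (ray_limit 2 two_pos))
  field_simp at hparam
  linarith

end

/-- Fix `u ∈ (0,1)` and points `p₀, p₁, p₂, p₃ ∈ ℝ²` with `p₁ ≠ p₂`.  The two-variable function
`f(ω₁, ω₂) = (B₀(u)·p₀ + ω₁·B₁(u)·p₁ + ω₂·B₂(u)·p₂ + B₃(u)·p₃) /
(B₀(u) + ω₁·B₁(u) + ω₂·B₂(u) + B₃(u))` has no limit as `(ω₁, ω₂) → (+∞, +∞)` along the
product filter `atTop ×ˢ atTop`. -/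
theorem nurbs_no_limit_two_independent_weights
    (u : ℝ) (hu : u ∈ Set.Ioo (0 : ℝ) 1)
    (p₀ p₁ p₂ p₃ : EuclideanSpace ℝ (Fin 2)) (hp : p₁ ≠ p₂) :
    ¬ ∃ L : EuclideanSpace ℝ (Fin 2),
      Tendsto
        (fun w : ℝ × ℝ =>
          (cubicBernstein 0 u + w.1 * cubicBernstein 1 u + w.2 * cubicBernstein 2 u +
              cubicBernstein 3 u)⁻¹ •
            ((cubicBernstein 0 u) • p₀ + (w.1 * cubicBernstein 1 u) • p₁ +
              (w.2 * cubicBernstein 2 u) • p₂ + (cubicBernstein 3 u) • p₃))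
        (atTop ×ˢ atTop) (𝓝 L) := by
  rintro ⟨L, hL⟩
  exact not_tendsto_twoWeightBlend _ _ (cubicBernstein_pos (by norm_num) hu)
    (cubicBernstein_pos (by norm_num) hu) p₀ p₃ hp L hL
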